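/- Let n and k be integers with 1 ≤ k ≤ n, let μ be the product of n independent copies of the uniform probability measure on [0,1], and let τ : [0,1]^n → ℝ send each point to its k-th smallest coordinate. Then the pushforward measure of μ under τ is the Beta distribution with parameters k and n−k+1. -/

import Mathlib

open MeasureTheory

/-- The `k`-th smallest coordinate (the `k`-th order statistic) of a point of `[0,1]^n`
(more generally of `ℝ^n`). -/
noncomputable def kthSmallest (n k : ℕ) (x : Fin n → ℝ) : ℝ :=
  (List.insertionSort (· ≤ ·) (List.ofFn x)).getD (k - 1) 0

/-- The product of `n` independent copies of the uniform probability measure on `[0,1]`. -/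
noncomputable def unifCube (n : ℕ) : Measure (Fin n → ℝ) :=
  Measure.pi fun _ => volume.restrict (Set.Icc 0 1)

/-- The Beta distribution with parameters `a` and `b`: the measure on `ℝ` supported on
`(0,1)` with density `x^(a-1) * (1-x)^(b-1) / B(a,b)`, where
`B(a,b) = Γ(a)Γ(b)/Γ(a+b)` is the Beta function. -/
noncomputable def betaMeasure (a b : ℝ) : Measure ℝ :=
  volume.withDensity fun x =>
    ENNReal.ofReal (if x ∈ Set.Ioo (0 : ℝ) 1 then
      x ^ (a - 1) * (1 - x) ^ (b - 1) / (Real.Gamma a * Real.Gamma b / Real.Gamma (a + b))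
    else 0)

/-! `kthSmallest n k x ≤ t` says exactly that at least `k` coordinates of `x` lie in `Iic t`.
Under the uniform measure the number of such coordinates is binomial with parameters `n` and `t`,
so the distribution function of the order statistic on `[0,1]` is the Bernstein tail
`∑_{j ≥ k} C(n,j) t^j (1-t)^(n-j)`. Its derivative telescopes to
`n C(n-1,k-1) t^(k-1) (1-t)^(n-k)`, the Beta(k, n-k+1) density, and both measures live on `[0,1]`.
-/

open Set
open scoped Finset ENNReal

theorem List.countP_ofFn {α : Type*} {n : ℕ} (f : Fin n → α) (p : α → Bool) :
    (List.ofFn f).countP p = #{i | p (f i)} := by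
  induction n with
  | zero => simp
  | succ n ih =>
    rw [List.ofFn_succ, List.countP_cons, ih, Fin.card_filter_univ_succ']
    split_ifs <;> simp [add_comm, *]

theorem List.Pairwise.getElem_le_iff_lt_countP {α : Type*} [Preorder α] [DecidableLE α]
    {l : List α} (hl : l.Pairwise (· ≤ ·)) {i : ℕ} (hi : i < l.length) (a : α) :
    l[i] ≤ a ↔ i < l.countP (· ≤ a) := by
  have hcount : l.countP (· ≤ a) = #{j : Fin l.length | l[(j : ℕ)] ≤ a} := by
    conv_lhs => rw [← List.ofFn_getElem (xs := l)]
    rw [List.countP_ofFn]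
    simp only [decide_eq_true_eq]
  rw [hcount]
  exact (Tuple.lt_card_le_iff_apply_le_of_monotone (j := ⟨i, hi⟩)
    fun _ _ h => hl.rel_get_of_le h).symm

theorem MeasureTheory.Measure.ext_of_Iic_of_ae_mem_Icc {α : Type*} [TopologicalSpace α]
    {m : MeasurableSpace α} [SecondCountableTopology α] [LinearOrder α] [OrderTopology α]
    [BorelSpace α] {μ ν : Measure α} [IsFiniteMeasure μ] {a b : α} (hab : a ≤ b)
    (hμ : ∀ᵐ x ∂μ, x ∈ Icc a b) (hν : ∀ᵐ x ∂ν, x ∈ Icc a b)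
    (h : ∀ t ∈ Icc a b, μ (Iic t) = ν (Iic t)) : μ = ν := by
  refine Measure.ext_of_Iic μ ν fun t => ?_
  rcases lt_or_ge t a with hta | hat
  · have hsub : Iic t ⊆ {x | x ∉ Icc a b} := fun x hx hx' => (hx.trans_lt hta).not_ge hx'.1
    rw [measure_mono_null hsub hμ, measure_mono_null hsub hν]
  rcases le_or_gt t b with htb | hbt
  · exact h t ⟨hat, htb⟩
  have hIic : ∀ ρ : Measure α, (∀ᵐ x ∂ρ, x ∈ Icc a b) → ρ (Iic t) = ρ (Iic b) := fun ρ hρ => by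
    rw [← measure_inter_conull (t := Icc a b) hρ,
      ← measure_inter_conull (s := Iic b) (t := Icc a b) hρ,
      inter_eq_right.2 (Icc_subset_Iic_self.trans (Iic_subset_Iic.2 hbt.le)),
      inter_eq_right.2 Icc_subset_Iic_self]
  rw [hIic μ hμ, hIic ν hν, h b ⟨hab, le_rfl⟩]

section CountInSet

variable {ι α : Type*} [Fintype ι] {s : Set α} [DecidablePred (· ∈ s)]

theorem setOf_filter_mem_eq_pi [DecidableEq ι] (S : Finset ι) :
    {x : ι → α | ({i | x i ∈ s} : Finset ι) = S} = univ.pi fun i => if i ∈ S then s else sᶜ := by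
  ext x
  simp only [mem_ofPred_eq, Finset.ext_iff, Finset.mem_filter_univ, mem_pi, mem_univ,
    forall_const]
  refine forall_congr' fun i => ?_
  split_ifs with hi <;> simp [hi]

theorem setOf_le_card_filter_mem_eq_biUnion (k : ℕ) :
    {x : ι → α | k ≤ #{i | x i ∈ s}} =
      ⋃ S ∈ ({S | k ≤ #S} : Finset (Finset ι)), {x | ({i | x i ∈ s} : Finset ι) = S} := by
  ext x
  simp

variable [MeasurableSpace α]

theorem measurableSet_setOf_filter_mem_eq (hs : MeasurableSet s) (S : Finset ι) :
    MeasurableSet {x : ι → α | ({i | x i ∈ s} : Finset ι) = S} := by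
  classical
  rw [setOf_filter_mem_eq_pi]
  exact .univ_pi fun i => by split_ifs <;> simp [hs]

theorem measurableSet_setOf_le_card_filter_mem (hs : MeasurableSet s) (k : ℕ) :
    MeasurableSet {x : ι → α | k ≤ #{i | x i ∈ s}} := by
  rw [setOf_le_card_filter_mem_eq_biUnion]
  exact Finset.measurableSet_biUnion _ fun S _ => measurableSet_setOf_filter_mem_eq hs S

variable (μ : Measure α) [SigmaFinite μ]

theorem MeasureTheory.Measure.pi_setOf_filter_mem_eq (S : Finset ι) :
    Measure.pi (fun _ : ι => μ) {x | ({i | x i ∈ s} : Finset ι) = S} =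
      μ s ^ #S * μ sᶜ ^ (Fintype.card ι - #S) := by
  classical
  rw [setOf_filter_mem_eq_pi, Measure.pi_pi]
  simp [apply_ite μ, Finset.prod_ite, Finset.filter_not, Finset.card_univ_sdiff]

theorem MeasureTheory.Measure.pi_setOf_le_card_filter_mem (hs : MeasurableSet s) (k : ℕ) :
    Measure.pi (fun _ : ι => μ) {x | k ≤ #{i | x i ∈ s}} =
      ∑ j ∈ Finset.Icc k (Fintype.card ι),
        (Fintype.card ι).choose j * (μ s ^ j * μ sᶜ ^ (Fintype.card ι - j)) := by
  let f : ℕ → ℝ≥0∞ := fun j => if k ≤ j then μ s ^ j * μ sᶜ ^ (Fintype.card ι - j) else 0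
  have hdisj : (({S | k ≤ #S} : Finset (Finset ι)) : Set (Finset ι)).PairwiseDisjoint
      fun S => {x : ι → α | ({i | x i ∈ s} : Finset ι) = S} :=
    fun S _ S' _ h => Set.disjoint_left.2 fun x hx hx' => h (hx.symm.trans hx')
  have hIcc : ({j ∈ Finset.range (Fintype.card ι + 1) | k ≤ j} : Finset ℕ) =
      Finset.Icc k (Fintype.card ι) := by
    ext j
    simp only [Finset.mem_filter, Finset.mem_range, Finset.mem_Icc]
    omega
  calc Measure.pi (fun _ : ι => μ) {x | k ≤ #{i | x i ∈ s}}
      = ∑ S ∈ (Finset.univ : Finset ι).powerset, f #S := by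
        rw [setOf_le_card_filter_mem_eq_biUnion, measure_biUnion_finset hdisj
          fun S _ => measurableSet_setOf_filter_mem_eq hs S, Finset.sum_filter,
          Finset.powerset_univ]
        simp only [Measure.pi_setOf_filter_mem_eq μ, f]
    _ = ∑ j ∈ Finset.range (Fintype.card ι + 1), (Fintype.card ι).choose j • f j := by
        rw [Finset.sum_powerset_apply_card, Finset.card_univ]
    _ = _ := by
        simp only [f, smul_ite, smul_zero, ← Finset.sum_filter, hIcc, nsmul_eq_mul]

end CountInSet

theorem bernsteinPolynomial.eval_nonneg {n ν : ℕ} {x : ℝ} (hx : x ∈ Icc 0 1) :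
    0 ≤ (bernsteinPolynomial ℝ n ν).eval x := by
  have hx0 : 0 ≤ x := hx.1
  have hx1 : 0 ≤ 1 - x := sub_nonneg.2 hx.2
  simp only [bernsteinPolynomial, Polynomial.eval_mul, Polynomial.eval_pow, Polynomial.eval_sub,
    Polynomial.eval_one, Polynomial.eval_X, Polynomial.eval_natCast]
  positivity

theorem bernsteinPolynomial.derivative_sum_Icc {R : Type*} [CommRing R] {n k : ℕ} (hk : 1 ≤ k)
    (hkn : k ≤ n) :
    Polynomial.derivative (∑ j ∈ Finset.Icc k n, bernsteinPolynomial R n j) =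
      n * bernsteinPolynomial R (n - 1) (k - 1) := by
  obtain ⟨l, rfl⟩ := Nat.exists_eq_add_of_le' hk
  rw [Polynomial.derivative_sum, ← Finset.Ico_add_one_right_eq_Icc,
    ← Finset.sum_Ico_add' (fun j => Polynomial.derivative (bernsteinPolynomial R n j)) l n 1]
  simp only [bernsteinPolynomial.derivative_succ, ← Finset.mul_sum]
  have htele := Finset.sum_Ico_sub (fun i => -bernsteinPolynomial R (n - 1) i) (by omega : l ≤ n)
  simp only [neg_sub_neg] at htele
  rw [htele, bernsteinPolynomial.eq_zero_of_lt R (by omega : n - 1 < n), sub_zero,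
    Nat.add_sub_cancel]

section kthSmallest

variable {n k : ℕ} (hk : 1 ≤ k) (hkn : k ≤ n) (x : Fin n → ℝ)
include hk hkn

theorem kthSmallest_eq_getElem :
    kthSmallest n k x = (List.insertionSort (· ≤ ·) (List.ofFn x))[k - 1]'(by
      rw [List.length_insertionSort, List.length_ofFn]; omega) :=
  List.getD_eq_getElem _ _ _

theorem kthSmallest_le_iff (t : ℝ) : kthSmallest n k x ≤ t ↔ k ≤ #{i | x i ≤ t} := by
  rw [kthSmallest_eq_getElem hk hkn, (List.pairwise_insertionSort _ _).getElem_le_iff_lt_countP,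
    (List.perm_insertionSort _ _).countP_eq, List.countP_ofFn]
  simp only [decide_eq_true_eq]
  omega

theorem kthSmallest_mem_range : kthSmallest n k x ∈ range x := by
  rw [kthSmallest_eq_getElem hk hkn, ← List.mem_ofFn']
  exact (List.perm_insertionSort _ _).subset (List.getElem_mem _)

theorem preimage_kthSmallest_Iic (t : ℝ) :
    kthSmallest n k ⁻¹' Iic t = {x | k ≤ #{i | x i ≤ t}} :=
  Set.ext fun x => kthSmallest_le_iff hk hkn x t

omit x in
theorem measurable_kthSmallest : Measurable (kthSmallest n k) :=
  measurable_of_Iic fun t => by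
    rw [preimage_kthSmallest_Iic hk hkn]
    exact measurableSet_setOf_le_card_filter_mem measurableSet_Iic k

end kthSmallest

theorem volume_restrict_Icc_Iic {t : ℝ} (ht : t ∈ Icc 0 1) :
    volume.restrict (Icc 0 1) (Iic t) = ENNReal.ofReal t := by
  have : Iic t ∩ Icc 0 1 = Icc 0 t := by
    ext x
    simp only [mem_inter_iff, mem_Iic, mem_Icc]
    grind
  rw [Measure.restrict_apply measurableSet_Iic, this, Real.volume_Icc, sub_zero]

theorem volume_restrict_Icc_compl_Iic {t : ℝ} (ht : t ∈ Icc 0 1) :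
    volume.restrict (Icc 0 1) (Iic t)ᶜ = ENNReal.ofReal (1 - t) := by
  have : Ioi t ∩ Icc 0 1 = Ioc t 1 := by
    ext x
    simp only [mem_inter_iff, mem_Ioi, mem_Icc, mem_Ioc]
    grind
  rw [compl_Iic, Measure.restrict_apply measurableSet_Ioi, this, Real.volume_Ioc]

instance (n : ℕ) : IsFiniteMeasure (unifCube n) := by
  rw [unifCube]
  infer_instance

theorem ae_unifCube_mem_Icc (n : ℕ) : ∀ᵐ x ∂unifCube n, ∀ i, x i ∈ Icc 0 1 :=
  ae_all_iff.2 fun i =>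
    (Measure.quasiMeasurePreserving_eval _ i).ae (ae_restrict_mem measurableSet_Icc)

theorem unifCube_setOf_le_card_filter_le {n : ℕ} (k : ℕ) {t : ℝ} (ht : t ∈ Icc 0 1) :
    unifCube n {x | k ≤ #{i | x i ≤ t}} =
      ENNReal.ofReal ((∑ j ∈ Finset.Icc k n, bernsteinPolynomial ℝ n j).eval t) := by
  have h1t : 0 ≤ 1 - t := sub_nonneg.2 ht.2
  have hbinom := Measure.pi_setOf_le_card_filter_mem (ι := Fin n)
    (volume.restrict (Icc (0 : ℝ) 1)) (measurableSet_Iic (a := t)) k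
  simp only [mem_Iic, Fintype.card_fin] at hbinom
  rw [unifCube, hbinom, volume_restrict_Icc_Iic ht, volume_restrict_Icc_compl_Iic ht,
    Polynomial.eval_finsetSum, ENNReal.ofReal_sum_of_nonneg fun j _ =>
      bernsteinPolynomial.eval_nonneg ht]
  refine Finset.sum_congr rfl fun j _ => ?_
  simp only [bernsteinPolynomial, Polynomial.eval_mul, Polynomial.eval_pow, Polynomial.eval_sub,
    Polynomial.eval_one, Polynomial.eval_X, Polynomial.eval_natCast]
  rw [mul_assoc, ENNReal.ofReal_mul (by positivity), ENNReal.ofReal_natCast,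
    ENNReal.ofReal_mul (pow_nonneg ht.1 _), ENNReal.ofReal_pow ht.1, ENNReal.ofReal_pow h1t]

theorem ae_betaMeasure_mem_Icc (a b : ℝ) : ∀ᵐ x ∂betaMeasure a b, x ∈ Icc 0 1 := by
  refine ae_iff.2 (show betaMeasure a b (Icc 0 1)ᶜ = 0 from ?_)
  rw [betaMeasure, withDensity_apply _ measurableSet_Icc.compl]
  refine (setLIntegral_congr_fun measurableSet_Icc.compl fun x hx => ?_).trans lintegral_zero
  rw [if_neg fun h => hx (Ioo_subset_Icc_self h), ENNReal.ofReal_zero]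

theorem betaMeasure_natCast_eq_withDensity {n k : ℕ} (hk : 1 ≤ k) (hkn : k ≤ n) :
    betaMeasure k (n - k + 1) = volume.withDensity ((Ioo 0 1).indicator fun x =>
      ENNReal.ofReal ((n * bernsteinPolynomial ℝ (n - 1) (k - 1)).eval x)) := by
  obtain ⟨l, rfl⟩ := Nat.exists_eq_add_of_le' hk
  obtain ⟨m, rfl⟩ := Nat.exists_eq_add_of_le' (hk.trans hkn)
  have hlm : l ≤ m := by omega
  have hm : ((m + 1 : ℕ) : ℝ) - ((l + 1 : ℕ) : ℝ) + 1 = ((m - l : ℕ) : ℝ) + 1 := by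
    push_cast [Nat.cast_sub hlm]; ring
  have hsum : ((l + 1 : ℕ) : ℝ) + (((m - l : ℕ) : ℝ) + 1) = ((m + 1 : ℕ) : ℝ) + 1 := by
    push_cast [Nat.cast_sub hlm]; ring
  have hnorm : Real.Gamma ((l + 1 : ℕ) : ℝ) * Real.Gamma (((m - l : ℕ) : ℝ) + 1) /
      Real.Gamma (((m + 1 : ℕ) : ℝ) + 1) = ((m + 1) * m.choose l : ℝ)⁻¹ := by
    rw [Nat.cast_succ l, Real.Gamma_nat_eq_factorial, Real.Gamma_nat_eq_factorial,
      Real.Gamma_nat_eq_factorial, Nat.cast_choose ℝ hlm, Nat.factorial_succ]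
    push_cast
    field_simp
  rw [betaMeasure]
  congr 1
  funext x
  simp only [indicator, hm, hsum, hnorm]
  split_ifs
  · rw [Nat.cast_succ l, add_sub_cancel_right, add_sub_cancel_right, Real.rpow_natCast,
      Real.rpow_natCast, div_inv_eq_mul]
    simp only [bernsteinPolynomial, Nat.add_sub_cancel, Polynomial.eval_mul,
      Polynomial.eval_pow, Polynomial.eval_sub, Polynomial.eval_one, Polynomial.eval_X,
      Polynomial.eval_add, Polynomial.eval_natCast, Nat.cast_succ]
    ring_nf
  · exact ENNReal.ofReal_zero

theorem betaMeasure_natCast_Iic {n k : ℕ} (hk : 1 ≤ k) (hkn : k ≤ n) {t : ℝ} (ht : t ∈ Icc 0 1) :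
    betaMeasure k (n - k + 1) (Iic t) =
      ENNReal.ofReal ((∑ j ∈ Finset.Icc k n, bernsteinPolynomial ℝ n j).eval t) := by
  set P := ∑ j ∈ Finset.Icc k n, bernsteinPolynomial ℝ n j
  have hP0 : P.eval 0 = 0 := by
    simp only [P, Polynomial.eval_finsetSum, bernsteinPolynomial.eval_at_0]
    exact Finset.sum_eq_zero fun j hj => if_neg (by simp at hj; omega)
  have hset : (Ioo 0 1 ∩ Iic t : Set ℝ) =ᵐ[volume] Ioc 0 t := by
    have := (Ioo_ae_eq_Ioc (μ := volume) (a := (0 : ℝ)) (b := 1)).inter (ae_eq_refl (Iic t))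
    rwa [Ioc_inter_Iic, inf_eq_right.2 ht.2] at this
  have hnonneg : 0 ≤ᵐ[volume.restrict (Ioc 0 t)] fun x => (Polynomial.derivative P).eval x := by
    refine ae_restrict_of_forall_mem measurableSet_Ioc fun x hx => ?_
    change 0 ≤ (Polynomial.derivative P).eval x
    rw [bernsteinPolynomial.derivative_sum_Icc hk hkn, Polynomial.eval_mul,
      Polynomial.eval_natCast]
    exact mul_nonneg n.cast_nonneg
      (bernsteinPolynomial.eval_nonneg ⟨hx.1.le, hx.2.trans ht.2⟩)
  rw [betaMeasure_natCast_eq_withDensity hk hkn, withDensity_apply _ measurableSet_Iic,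
    lintegral_indicator measurableSet_Ioo, Measure.restrict_restrict measurableSet_Ioo,
    Measure.restrict_congr_set hset, ← bernsteinPolynomial.derivative_sum_Icc hk hkn,
    ← ofReal_integral_eq_lintegral_ofReal (P.derivative.continuous.integrableOn_Ioc) hnonneg,
    ← intervalIntegral.integral_of_le ht.1,
    intervalIntegral.integral_eq_sub_of_hasDerivAt (fun x _ => P.hasDerivAt x)
      (P.derivative.continuous.intervalIntegrable 0 t), hP0, sub_zero]

/-- The pushforward of the uniform measure on `[0,1]^n` under the `k`-th order statistic
is the Beta distribution with parameters `k` and `n - k + 1`. -/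
theorem order_statistic_beta (n k : ℕ) (hk : 1 ≤ k) (hkn : k ≤ n) :
    (unifCube n).map (kthSmallest n k) = betaMeasure (k : ℝ) ((n : ℝ) - (k : ℝ) + 1) := by
  have hmeas := measurable_kthSmallest hk hkn
  refine Measure.ext_of_Iic_of_ae_mem_Icc zero_le_one ?_ (ae_betaMeasure_mem_Icc _ _)
    fun t ht => ?_
  · refine (ae_map_iff hmeas.aemeasurable measurableSet_Icc).2 <|
      (ae_unifCube_mem_Icc n).mono fun x hx => ?_
    obtain ⟨i, hi⟩ := kthSmallest_mem_range hk hkn x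
    exact hi ▸ hx i
  · rw [Measure.map_apply hmeas measurableSet_Iic, preimage_kthSmallest_Iic hk hkn,
      unifCube_setOf_le_card_filter_le k ht, betaMeasure_natCast_Iic hk hkn ht]
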